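/- arXiv:2512.24535 — 6 statements merged into one kernel-verified Lean document; each statement's English description precedes it below -/
import Mathlib

section
/- Let (P_n)_{n∈ℤ} be a sequence of real polynomials satisfying the Chebyshev recursion P_{n+1} = X·P_n − P_{n−1} for all n ∈ ℤ (in the paper the series additionally has the ramping property for n ≥ N; only the recursion is used). Then for every integer N and all positive integers k, k', r with r < k + k', one has P_{N+k}(2·cos(r·π/(k+k'))) = (−1)^r · P_{N−k'}(2·cos(r·π/(k+k'))). -/
/-- A Chebyshev series `(P n)_{n ∈ ℤ}` of real polynomials satisfies
`P (N+k) (2 cos (r π / (k+k'))) = (-1)^r * P (N-k') (2 cos (r π / (k+k')))`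
for all positive integers `k, k', r` with `r < k + k'`. -/
theorem stmt0 (P : ℤ → Polynomial ℝ)
    (hP : ∀ n : ℤ, P (n + 1) = Polynomial.X * P n - P (n - 1))
    (N : ℤ) (k k' r : ℕ) (hk : 0 < k) (hk' : 0 < k') (hr : 0 < r)
    (hrkk' : r < k + k') :
    (P (N + k)).eval (2 * Real.cos (r * Real.pi / (k + k'))) =
      (-1 : ℝ) ^ r * (P (N - k')).eval (2 * Real.cos (r * Real.pi / (k + k'))) := by
  set θ : ℝ := r * Real.pi / (k + k') with hθ
  set x : ℝ := 2 * Real.cos θ with hx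
  set a : ℤ → ℝ := fun n => (P n).eval x with ha
  have hrec : ∀ n : ℤ, a (n + 1) = x * a n - a (n - 1) := by
    intro n
    simp [ha, hP n, Polynomial.eval_mul, Polynomial.eval_sub]
  -- key identity
  have key : ∀ (m : ℕ) (n : ℤ),
      Real.sin θ * a (n + m) =
        a (n + 1) * Real.sin (m * θ) - a n * Real.sin ((m : ℝ) * θ - θ) := by
    intro m
    induction m using Nat.twoStepInduction with
    | zero => intro n; simp [Real.sin_neg]; ring
    | one => intro n; simp; ring
    | more m ih1 ih2 =>
      intro n
      have h1 := ih1 n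
      have h2 := ih2 n
      have hstep := hrec (n + m + 1)
      have e1 : (n + m + 1) + 1 = n + (m + 2 : ℕ) := by push_cast; ring
      have e2 : (n + m + 1) - 1 = n + (m : ℕ) := by push_cast; ring
      have e3 : (n + m + 1 : ℤ) = n + (m + 1 : ℕ) := by push_cast; ring
      rw [e1, e2, e3] at hstep
      rw [hstep]
      have s1 : Real.sin (((m : ℝ) + 2) * θ) =
          2 * Real.cos θ * Real.sin (((m : ℝ) + 1) * θ) - Real.sin ((m : ℝ) * θ) := by
        have := Real.sin_add (((m : ℝ) + 1) * θ) θ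
        have := Real.sin_sub (((m : ℝ) + 1) * θ) θ
        have hA : ((m : ℝ) + 2) * θ = ((m : ℝ) + 1) * θ + θ := by ring
        have hB : (m : ℝ) * θ = ((m : ℝ) + 1) * θ - θ := by ring
        rw [hA, hB, Real.sin_add, Real.sin_sub]; ring
      have s2 : Real.sin (((m : ℝ) + 2) * θ - θ) = Real.sin (((m : ℝ) + 1) * θ) := by
        ring_nf
      have t1 : Real.sin (((m : ℝ) + 1) * θ - θ) = Real.sin ((m : ℝ) * θ) := by
        congr 1; ring
      have s3 : Real.sin (((m : ℝ) + 1) * θ) =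
          2 * Real.cos θ * Real.sin ((m : ℝ) * θ) - Real.sin ((m : ℝ) * θ - θ) := by
        have hA : ((m : ℝ) + 1) * θ = (m : ℝ) * θ + θ := by ring
        rw [hA, Real.sin_add, Real.sin_sub]; ring
      push_cast
      push_cast at h1 h2
      linear_combination (Real.sin θ * a (n + ((m : ℤ) + 1))) * hx + (2 * Real.cos θ) * h2
        - h1 - a (n + 1) * s1 + a n * s2 + a n * s3 - (2 * Real.cos θ * a n) * t1
  have hkk : (0 : ℝ) < (k + k' : ℕ) := by positivity
  have hkk' : ((k : ℝ) + k') ≠ 0 := by push_cast at hkk ⊢; linarith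
  have hθval : ((k + k' : ℕ) : ℝ) * θ = r * Real.pi := by
    rw [hθ]; push_cast; field_simp
  have hsin0 : Real.sin (((k + k' : ℕ) : ℝ) * θ) = 0 := by
    rw [hθval]; exact Real.sin_nat_mul_pi r
  have hsin1 : Real.sin (((k + k' : ℕ) : ℝ) * θ - θ) = -((-1 : ℝ) ^ r * Real.sin θ) := by
    rw [hθval]; exact Real.sin_nat_mul_pi_sub θ r
  have hkk2 : (0:ℝ) < (k:ℝ) + k' := by push_cast at hkk; exact hkk
  have hθpos : 0 < θ := by
    rw [hθ]
    apply div_pos _ hkk2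
    have : (0:ℝ) < r := by exact_mod_cast hr
    positivity
  have hθlt : θ < Real.pi := by
    rw [hθ, div_lt_iff₀ hkk2]
    have h1 : (r : ℝ) < (k : ℝ) + k' := by exact_mod_cast hrkk'
    have := Real.pi_pos
    nlinarith
  have hsinθ : Real.sin θ ≠ 0 :=
    ne_of_gt (Real.sin_pos_of_pos_of_lt_pi hθpos hθlt)
  have hmain := key (k + k') (N - k')
  rw [hsin0, hsin1] at hmain
  have hNk : N - k' + ((k + k' : ℕ) : ℤ) = N + k := by push_cast; ring
  rw [hNk] at hmain
  have : Real.sin θ * a (N + k) = Real.sin θ * ((-1 : ℝ) ^ r * a (N - k')) := by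
    rw [hmain]; ring
  have hfin := mul_left_cancel₀ hsinθ this
  exact hfin
end

section
/- For every integer l, every integer k ≥ 0, and every integer r with 1 ≤ r ≤ k+1: the real polynomial Q^{(l)}_k := P^U_{k+3} − (l+1)·(P^U_{k+2} + P^U_{k+1}) satisfies Q^{(l)}_k(2·cos(r·π/(k+2))) = (−1)^r · (l+2). -/
/-- `PU n` is the real polynomial with `PU 0 = 0`, `PU 1 = 1` and the Chebyshev recursion
`PU (n+1) = X * PU n - PU (n-1)`; equivalently `PU n x = U (n-1) (x/2)` where `U` is
Mathlib's integer-indexed Chebyshev polynomial of the second kind. -/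
noncomputable def PU (n : ℤ) : Polynomial ℝ :=
  (Polynomial.Chebyshev.U ℝ (n - 1)).comp (Polynomial.C (1 / 2) * Polynomial.X)

/-- `Qpoly l k = PU (k+3) - (l+1) * (PU (k+2) + PU (k+1))`, the paper's closed formula
for the column-partition series `P^{(1^{l+2})}_{l+4+k}`. -/
noncomputable def Qpoly (l : ℤ) (k : ℕ) : Polynomial ℝ :=
  PU (k + 3) - Polynomial.C ((l : ℝ) + 1) * (PU (k + 2) + PU (k + 1))

lemma PU_eval_cos (n : ℤ) (θ : ℝ) :
    (PU n).eval (2 * Real.cos θ) * Real.sin θ = Real.sin (n * θ) := by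
  have h : (PU n).eval (2 * Real.cos θ) =
      (Polynomial.Chebyshev.U ℝ (n - 1)).eval (Real.cos θ) := by
    simp [PU, Polynomial.eval_comp]
  rw [h, Polynomial.Chebyshev.U_real_cos]
  norm_num

theorem stmt9 (l : ℤ) (k r : ℕ) (hr1 : 1 ≤ r) (hr2 : r ≤ k + 1) :
    (Qpoly l k).eval (2 * Real.cos (r * Real.pi / (k + 2))) =
      (-1 : ℝ) ^ r * ((l : ℝ) + 2) := by
  set θ : ℝ := r * Real.pi / (k + 2) with hθ
  have hk2 : (0 : ℝ) < (k : ℝ) + 2 := by positivity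
  have hθpos : 0 < θ := by
    apply div_pos _ hk2
    have : (0:ℝ) < r := by exact_mod_cast hr1
    positivity
  have hθlt : θ < Real.pi := by
    rw [hθ, div_lt_iff₀ hk2]
    have hrk : (r : ℝ) < (k : ℝ) + 2 := by
      have : (r : ℝ) ≤ (k : ℝ) + 1 := by exact_mod_cast hr2
      linarith
    nlinarith [Real.pi_pos]
  have hsin : Real.sin θ ≠ 0 := ne_of_gt (Real.sin_pos_of_pos_of_lt_pi hθpos hθlt)
  have hkθ : ((k : ℝ) + 2) * θ = r * Real.pi := by
    rw [hθ]; field_simp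
  have h2 : Real.sin ((((k : ℤ) + 2) : ℝ) * θ) = 0 := by
    push_cast
    rw [hkθ]; exact Real.sin_nat_mul_pi r
  have hcos : Real.cos ((r : ℝ) * Real.pi) = (-1 : ℝ) ^ r := by
    simpa using Real.cos_nat_mul_pi_sub 0 r
  have h3 : Real.sin ((((k : ℤ) + 3) : ℝ) * θ) = (-1 : ℝ) ^ r * Real.sin θ := by
    have : (((k : ℤ) + 3) : ℝ) * θ = r * Real.pi + θ := by
      push_cast; rw [← hkθ]; ring
    rw [this, Real.sin_add, Real.sin_nat_mul_pi, hcos]; ring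
  have h1 : Real.sin ((((k : ℤ) + 1) : ℝ) * θ) = -((-1 : ℝ) ^ r * Real.sin θ) := by
    have : (((k : ℤ) + 1) : ℝ) * θ = r * Real.pi - θ := by
      push_cast; rw [← hkθ]; ring
    rw [this, Real.sin_nat_mul_pi_sub]
  have key := fun n => PU_eval_cos n θ
  have heval : (Qpoly l k).eval (2 * Real.cos θ) * Real.sin θ =
      ((-1 : ℝ) ^ r * ((l : ℝ) + 2)) * Real.sin θ := by
    simp only [Qpoly, Polynomial.eval_sub, Polynomial.eval_mul, Polynomial.eval_add,
      Polynomial.eval_C]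
    have e3 := key ((k : ℤ) + 3)
    have e2 := key ((k : ℤ) + 2)
    have e1 := key ((k : ℤ) + 1)
    push_cast at e1 e2 e3 h1 h2 h3
    rw [h3] at e3; rw [h2] at e2; rw [h1] at e1
    linear_combination e3 - ((l:ℝ)+1)*(e2 + e1)
  exact mul_right_cancel₀ hsin heval
end

section
/- For every integer l and every integer k ≥ 0, the real polynomial Q^{(l)}_k := P^U_{k+3} − (l+1)·(P^U_{k+2} + P^U_{k+1}) satisfies Q^{(l)}_k(−2) = (−1)^k · (k + l + 4) and Q^{(l)}_k(l+2) = −P^U_k(l+2). -/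
lemma PU_zero : PU 0 = 0 := by
  simp [PU, Polynomial.Chebyshev.U_neg_one]

lemma PU_one : PU 1 = 1 := by
  simp [PU, Polynomial.Chebyshev.U_zero]

lemma PU_rec (x : ℝ) (n : ℤ) :
    (PU (n + 2)).eval x = x * (PU (n + 1)).eval x - (PU n).eval x := by
  have h := Polynomial.Chebyshev.U_add_two ℝ (n - 1)
  have h2 : n - 1 + 2 = n + 2 - 1 := by ring
  have h3 : n - 1 + 1 = n + 1 - 1 := by ring
  rw [h2, h3] at h
  simp only [PU, h, Polynomial.sub_comp, Polynomial.mul_comp, Polynomial.ofNat_comp,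
    Polynomial.X_comp, Polynomial.eval_sub, Polynomial.eval_mul, Polynomial.eval_ofNat,
    Polynomial.eval_X, Polynomial.eval_C, Polynomial.eval_comp]
  norm_num
  left; ring

lemma PU_neg_two (n : ℕ) : (PU n).eval (-2) = (-1 : ℝ) ^ (n + 1) * n := by
  induction n using Nat.twoStepInduction with
  | zero => simp [PU_zero]
  | one => simp [PU_one]
  | more n ih1 ih2 =>
    have h : ((n : ℤ) + 2) = ((n + 2 : ℕ) : ℤ) := by push_cast; ring
    have h1 : ((n : ℤ) + 1) = ((n + 1 : ℕ) : ℤ) := by push_cast; ring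
    have := PU_rec (-2) n
    rw [h, h1] at this
    rw [this, ih1, ih2]
    push_cast
    ring

theorem stmt10 (l : ℤ) (k : ℕ) :
    (Qpoly l k).eval (-2) = (-1 : ℝ) ^ k * ((k : ℝ) + (l : ℝ) + 4) ∧
      (Qpoly l k).eval ((l : ℝ) + 2) = -((PU k).eval ((l : ℝ) + 2)) := by
  have c3 : ((k : ℤ) + 3) = ((k + 3 : ℕ) : ℤ) := by push_cast; ring
  have c2 : ((k : ℤ) + 2) = ((k + 2 : ℕ) : ℤ) := by push_cast; ring
  have c1 : ((k : ℤ) + 1) = ((k + 1 : ℕ) : ℤ) := by push_cast; ring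
  constructor
  · rw [Qpoly, Polynomial.eval_sub, Polynomial.eval_mul, Polynomial.eval_add,
      Polynomial.eval_C, c3, c2, c1, PU_neg_two, PU_neg_two, PU_neg_two]
    push_cast
    ring
  · set x : ℝ := (l : ℝ) + 2 with hx
    have r1 := PU_rec x k
    have r2 := PU_rec x (k + 1)
    rw [show (k : ℤ) + 1 + 2 = (k : ℤ) + 3 by ring, show (k : ℤ) + 1 + 1 = (k : ℤ) + 2 by ring]
      at r2
    rw [Qpoly, Polynomial.eval_sub, Polynomial.eval_mul, Polynomial.eval_add,
      Polynomial.eval_C, r2, r1]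
    rw [hx]
    ring
end

section
/- For all integers l ≥ 4, k ≥ 1, and r with 1 ≤ r ≤ k, one has (−1)^r · H^{(l)}_k(2·cos(r·π/(k+1))) > 0; that is, the sign of H^{(l)}_k evaluated at X_r := 2·cos(r·π/(k+1)) equals (−1)^r. -/
/-- `Hpoly l k`, the paper's closed formula for the hook-transpose series
`P^{(l+1,1)^T}_{l+4+k}`:
`PU (k+5) - 2(l-1) PU (k+4) + l(l-5) PU (k+3) + 3l(l-1) PU (k+2)
  + 2(l²-2l-1) PU (k+1) + l(l-1) PU k - (l+1) PU (k-1)`. -/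
noncomputable def Hpoly (l : ℤ) (k : ℤ) : Polynomial ℝ :=
  PU (k + 5) - Polynomial.C (2 * ((l : ℝ) - 1)) * PU (k + 4)
    + Polynomial.C ((l : ℝ) * ((l : ℝ) - 5)) * PU (k + 3)
    + Polynomial.C (3 * (l : ℝ) * ((l : ℝ) - 1)) * PU (k + 2)
    + Polynomial.C (2 * ((l : ℝ) ^ 2 - 2 * (l : ℝ) - 1)) * PU (k + 1)
    + Polynomial.C ((l : ℝ) * ((l : ℝ) - 1)) * PU k
    - Polynomial.C ((l : ℝ) + 1) * PU (k - 1)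

/-! With `θ = rπ/(k+1)` and `x = 2 cos θ` one has `PU n (x) · sin θ = sin (nθ)`, so shifting the
index by `k + 1` multiplies `PU n (x)` by `(-1)^r`. As `Hpoly l k` is a fixed linear combination
of shifts of `PU`, this gives `Hpoly l k (x) = (-1)^r · Hpoly l (-1) (x)`, and
`Hpoly l (-1) = (X + 2)(X - (l - 1))(X - (l + 1))` is positive on `(-2, l - 1)`, which contains
`x` as soon as `l ≥ 4`. -/

open Polynomial Real

lemma PU_add_two (n : ℤ) : PU (n + 2) = X * PU (n + 1) - PU n := by
  simp only [PU, show n + 2 - 1 = n - 1 + 2 by ring, show n + 1 - 1 = n - 1 + 1 by ring,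
    Chebyshev.U_add_two, sub_comp, mul_comp, X_comp, ofNat_comp, Nat.cast_ofNat, ← mul_assoc]
  have h : (2 : ℝ[X]) * C (1 / 2) = 1 := by rw [← C_ofNat, ← C_mul]; norm_num
  rw [h, one_mul]

lemma PU_eval_two_mul_cos_mul_sin (n : ℤ) (θ : ℝ) :
    (PU n).eval (2 * cos θ) * sin θ = sin (n * θ) := by
  simp only [PU, eval_comp, eval_mul, eval_C, eval_X]
  rw [show (1 / 2 : ℝ) * (2 * cos θ) = cos θ by ring, Chebyshev.U_real_cos]
  push_cast
  rw [sub_add_cancel]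

lemma PU_eval_two_mul_cos_add {θ : ℝ} (hθ : sin θ ≠ 0) {N : ℤ} {r : ℕ} (hN : N * θ = r * π)
    (m : ℤ) : (PU (N + m)).eval (2 * cos θ) = (-1) ^ r * (PU m).eval (2 * cos θ) := by
  apply mul_right_cancel₀ hθ
  rw [mul_assoc, PU_eval_two_mul_cos_mul_sin, PU_eval_two_mul_cos_mul_sin]
  push_cast
  rw [add_mul, hN, add_comm, sin_add_nat_mul_pi]

lemma Hpoly_eval_add_of_PU_eval_add {x ε : ℝ} {N : ℤ}
    (hN : ∀ m, (PU (N + m)).eval x = ε * (PU m).eval x) (l k : ℤ) :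
    (Hpoly l (N + k)).eval x = ε * (Hpoly l k).eval x := by
  simp only [Hpoly, eval_add, eval_sub, eval_mul, eval_C, add_assoc, add_sub_assoc]
  simp only [hN]
  ring

lemma Hpoly_neg_one (l : ℤ) :
    Hpoly l (-1) = (X + 2) * (X - C ((l : ℝ) - 1)) * (X - C ((l : ℝ) + 1)) := by
  have h0 : PU 0 = 0 := by simp [PU]
  have h1 : PU 1 = 1 := by simp [PU]
  have hm1 : PU (-1) = -1 := by
    have h := PU_add_two (-1); norm_num [h0, h1] at h; linear_combination h
  have hm2 : PU (-2) = -X := by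
    have h := PU_add_two (-2); norm_num [h0, hm1] at h; linear_combination h
  have h2 : PU 2 = X := by simpa [h0, h1] using PU_add_two 0
  have h3 : PU 3 = X * X - 1 := by simpa [h1, h2] using PU_add_two 1
  have h4 : PU 4 = X * (X * X - 1) - X := by simpa [h2, h3] using PU_add_two 2
  norm_num [Hpoly, h0, h1, h2, h3, h4, hm1, hm2]
  simp only [C_ofNat]
  ring

lemma Hpoly_neg_one_eval_pos {l : ℤ} {x : ℝ} (hx₁ : -2 < x) (hx₂ : x < l - 1) :
    0 < (Hpoly l (-1)).eval x := by
  rw [Hpoly_neg_one]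
  simp only [eval_mul, eval_add, eval_sub, eval_X, eval_C, eval_ofNat]
  exact mul_pos_of_neg_of_neg (mul_neg_of_pos_of_neg (by linarith) (by linarith)) (by linarith)

theorem stmt14_general (l : ℤ) (hl : 4 ≤ l) (k : ℕ) (r : ℕ)
    (hr1 : 1 ≤ r) (hr2 : r ≤ k) :
    0 < (-1 : ℝ) ^ r * (Hpoly l k).eval (2 * Real.cos (r * Real.pi / (k + 1))) := by
  set θ := r * π / (k + 1) with hθ
  have hk₀ : (0 : ℝ) < k + 1 := by positivity
  have hθ₀ : 0 < θ := by
    have : (0 : ℝ) < r := by exact_mod_cast hr1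
    positivity
  have hθπ : θ < π := by
    rw [hθ, div_lt_iff₀ hk₀]
    nlinarith [pi_pos, (Nat.cast_le.mpr hr2 : (r : ℝ) ≤ k)]
  have hN : ((k + 1 : ℤ) : ℝ) * θ = r * π := by
    push_cast; rw [hθ]; field_simp
  have hperiod := Hpoly_eval_add_of_PU_eval_add
    (PU_eval_two_mul_cos_add (sin_pos_of_pos_of_lt_pi hθ₀ hθπ).ne' hN) l (-1)
  rw [show (k + 1 : ℤ) + -1 = k by ring] at hperiod
  have hcos : -1 < cos θ := by
    simpa using cos_lt_cos_of_nonneg_of_le_pi hθ₀.le le_rfl hθπ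
  have hl' : (4 : ℝ) ≤ l := by exact_mod_cast hl
  rw [hperiod, ← mul_assoc, ← pow_add, ← two_mul, pow_mul, neg_one_sq, one_pow, one_mul]
  exact Hpoly_neg_one_eval_pos (by linarith) (by linarith [cos_le_one θ])

/-- for integers `l ≥ 4`, `k ≥ 1` and `1 ≤ r ≤ k`, the sign of
`Hpoly l k` at `2 cos (r π / (k+1))` is `(-1)^r`. -/
theorem stmt14 (l : ℤ) (hl : 4 ≤ l) (k : ℕ) (hk : 1 ≤ k) (r : ℕ)
    (hr1 : 1 ≤ r) (hr2 : r ≤ k) :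
    0 < (-1 : ℝ) ^ r * (Hpoly l k).eval (2 * Real.cos (r * Real.pi / (k + 1))) :=
  stmt14_general l hl k r hr1 hr2
end

section
/- For all integers l ≥ 4 and k ≥ 0, one has H^{(l)}_k(2) > 0 and (−1)^{k+1} · H^{(l)}_k(−2) > 0. -/
open Polynomial Polynomial.Chebyshev in
lemma U_eval_one' (n : ℤ) : (U ℝ n).eval 1 = (n : ℝ) + 1 := by
  induction n using Polynomial.Chebyshev.induct with
  | zero => simp
  | one => simp; norm_num
  | add_two n ih1 ih2 =>
    rw [U_add_two]
    simp only [eval_sub, eval_mul, eval_ofNat, eval_X] at *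
    push_cast at *
    linarith
  | neg_add_one n ih1 ih2 =>
    have h := U_sub_one ℝ (-(n:ℤ))
    rw [show (-(n:ℤ) - 1) = (-(n:ℤ)) - 1 from rfl, h]
    simp only [eval_sub, eval_mul, eval_ofNat, eval_X] at *
    push_cast at *
    linarith

open Polynomial Polynomial.Chebyshev in
lemma U_eval_neg_one' (n : ℤ) : (U ℝ n).eval (-1) = (-1 : ℝ) ^ n * ((n : ℝ) + 1) := by
  have hne : (-1 : ℝ) ≠ 0 := by norm_num
  induction n using Polynomial.Chebyshev.induct with
  | zero => simp
  | one => simp; norm_num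
  | add_two n ih1 ih2 =>
    rw [U_add_two]
    have e1 : (-1:ℝ)^((n:ℤ)+2) = (-1:ℝ)^(n:ℤ) := by
      rw [zpow_add₀ hne]; norm_num
    have e2 : (-1:ℝ)^((n:ℤ)+1) = -(-1:ℝ)^(n:ℤ) := by
      rw [zpow_add₀ hne]; norm_num
    simp only [eval_sub, eval_mul, eval_ofNat, eval_X]
    rw [e1]; rw [e2] at ih1
    push_cast at *
    linear_combination (-2 : ℝ) * ih1 - ih2
  | neg_add_one n ih1 ih2 =>
    have h := U_sub_one ℝ (-(n:ℤ))
    rw [show (-(n:ℤ) - 1) = (-(n:ℤ)) - 1 from rfl, h]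
    have e1 : (-1:ℝ)^(-(n:ℤ)-1) = -(-1:ℝ)^(-(n:ℤ)) := by
      rw [zpow_sub₀ hne]; norm_num; ring
    have e2 : (-1:ℝ)^(-(n:ℤ)+1) = -(-1:ℝ)^(-(n:ℤ)) := by
      rw [zpow_add₀ hne]; norm_num
    simp only [eval_sub, eval_mul, eval_ofNat, eval_X]
    rw [e1]; rw [e2] at ih2
    push_cast at *
    linear_combination (-2 : ℝ) * ih1 - ih2

open Polynomial in
lemma PU_eval_two' (n : ℤ) : (PU n).eval 2 = (n : ℝ) := by
  unfold PU
  rw [eval_comp]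
  simp only [eval_mul, eval_C, eval_X]
  norm_num [U_eval_one']

open Polynomial in
lemma PU_eval_neg_two' (n : ℤ) : (PU n).eval (-2) = -((-1:ℝ)^n * (n:ℝ)) := by
  unfold PU
  rw [eval_comp]
  simp only [eval_mul, eval_C, eval_X]
  norm_num [U_eval_neg_one']
  rw [zpow_sub₀ (by norm_num : (-1:ℝ) ≠ 0)]
  ring

open Polynomial in
/-- for integers `l ≥ 4` and `k ≥ 0`,
`Hpoly l k (2) > 0` and `(-1)^(k+1) * Hpoly l k (-2) > 0`. -/
theorem stmt15 (l : ℤ) (hl : 4 ≤ l) (k : ℕ) :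
    0 < (Hpoly l k).eval 2 ∧ 0 < (-1 : ℝ) ^ (k + 1) * (Hpoly l k).eval (-2) := by
  have hl' : (4:ℝ) ≤ (l:ℝ) := by exact_mod_cast hl
  have hk : (0:ℝ) ≤ (k:ℝ) := Nat.cast_nonneg k
  constructor
  · simp only [Hpoly, eval_add, eval_sub, eval_mul, eval_C, PU_eval_two']
    push_cast
    nlinarith [mul_nonneg hk (show (0:ℝ) ≤ 7*(l:ℝ)^2 - 16*(l:ℝ) by nlinarith),
      mul_nonneg (show (0:ℝ) ≤ (l:ℝ)-4 by linarith) (show (0:ℝ) ≤ 11*(l:ℝ)+12 by linarith)]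
  · have hne : (-1:ℝ) ≠ 0 := by norm_num
    have key : ∀ m : ℤ, (PU ((k:ℤ)+m)).eval (-2)
        = -((-1:ℝ)^k * ((-1:ℝ)^m * ((k:ℝ)+(m:ℝ)))) := by
      intro m
      rw [PU_eval_neg_two', zpow_add₀ hne, zpow_natCast]
      push_cast; ring
    have h5 : (PU ((k:ℤ)+5)).eval (-2) = (-1:ℝ)^k * ((k:ℝ)+5) := by
      rw [key 5]; norm_num; ring
    have h4 : (PU ((k:ℤ)+4)).eval (-2) = -((-1:ℝ)^k * ((k:ℝ)+4)) := by
      rw [key 4]; norm_num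
    have h3 : (PU ((k:ℤ)+3)).eval (-2) = (-1:ℝ)^k * ((k:ℝ)+3) := by
      rw [key 3]; norm_num; ring
    have h2 : (PU ((k:ℤ)+2)).eval (-2) = -((-1:ℝ)^k * ((k:ℝ)+2)) := by
      rw [key 2]; norm_num
    have h1 : (PU ((k:ℤ)+1)).eval (-2) = (-1:ℝ)^k * ((k:ℝ)+1) := by
      rw [key 1]; norm_num; ring
    have h0 : (PU (k:ℤ)).eval (-2) = -((-1:ℝ)^k * (k:ℝ)) := by
      have := key 0; norm_num at this; simpa using this
    have hm1 : (PU ((k:ℤ)-1)).eval (-2) = (-1:ℝ)^k * ((k:ℝ)-1) := by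
      rw [show (k:ℤ)-1 = (k:ℤ)+(-1) from by ring, key (-1)]; norm_num; ring
    simp only [Hpoly, eval_add, eval_sub, eval_mul, eval_C, h5, h4, h3, h2, h1, h0, hm1]
    rcases Nat.even_or_odd k with hpar | hpar
    · rw [hpar.neg_one_pow, (Even.add_one hpar).neg_one_pow]
      nlinarith [mul_nonneg hk (sq_nonneg ((l:ℝ)+2)), show (0:ℝ) < ((l:ℝ)+2)^2 by positivity]
    · rw [hpar.neg_one_pow, (Odd.add_one hpar).neg_one_pow]
      nlinarith [mul_nonneg hk (sq_nonneg ((l:ℝ)+2)), show (0:ℝ) < ((l:ℝ)+2)^2 by positivity]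
end

section
/- For all integers l ≥ 1 and k ≥ 0, the real polynomial R^{(l)}_{k+2} has at least k+1 distinct real roots; more precisely, for every r = 0, 1, …, k there is a root of R^{(l)}_{k+2} in the open interval (2·cos((r+1)·π/(k+2)), 2·cos(r·π/(k+2))). -/
/-- `Rseq l` is the Chebyshev series of real polynomials with initial values
`R 0 = (l+2)(X + 2l)` and `R 1 = (X + (l-1))(X + 2(l+1))` and recursion
`R (m+2) = X * R (m+1) - R m`; `Rseq l (k+2)` corresponds to the paper's
`P^{(l+2)}_{l+4+k}`. -/
noncomputable def Rseq (l : ℤ) : ℕ → Polynomial ℝ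
  | 0 => Polynomial.C ((l : ℝ) + 2) * (Polynomial.X + Polynomial.C (2 * (l : ℝ)))
  | 1 => (Polynomial.X + Polynomial.C ((l : ℝ) - 1)) *
      (Polynomial.X + Polynomial.C (2 * ((l : ℝ) + 1)))
  | (m + 2) => Polynomial.X * Rseq l (m + 1) - Rseq l m

open Real Polynomial

lemma Rseq_key (l : ℤ) (θ : ℝ) : ∀ m : ℕ,
    (Rseq l m).eval (2 * Real.cos θ) * Real.sin θ =
      (Rseq l 1).eval (2 * Real.cos θ) * Real.sin ((m : ℝ) * θ)
      - (Rseq l 0).eval (2 * Real.cos θ) * Real.sin (((m : ℝ) - 1) * θ) := by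
  intro m
  induction m using Nat.twoStepInduction with
  | zero =>
    have e : ((0 : ℕ) : ℝ) - 1 = -1 := by norm_num
    rw [e]
    have e2 : (-1 : ℝ) * θ = -θ := by ring
    rw [e2, Real.sin_neg]
    push_cast
    simp
  | one =>
    push_cast
    simp
  | more m ih1 ih2 =>
    have hrec : Rseq l (m + 2) = Polynomial.X * Rseq l (m + 1) - Rseq l m := by
      rw [Rseq]
    have C1 : ((m : ℝ) + 1 - 1) * θ = (m : ℝ) * θ := by ring
    have t1 : Real.sin (((m : ℝ) + 2) * θ)
        = 2 * Real.cos θ * Real.sin (((m : ℝ) + 1) * θ) - Real.sin ((m : ℝ) * θ) := by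
      have A1 : ((m : ℝ) + 2) * θ = ((m : ℝ) + 1) * θ + θ := by ring
      have A2 : (m : ℝ) * θ = ((m : ℝ) + 1) * θ - θ := by ring
      rw [A1, A2, Real.sin_add, Real.sin_sub]; ring
    have t2 : Real.sin (((m : ℝ) + 1) * θ)
        = 2 * Real.cos θ * Real.sin ((m : ℝ) * θ) - Real.sin (((m : ℝ) - 1) * θ) := by
      have B1 : ((m : ℝ) + 1) * θ = (m : ℝ) * θ + θ := by ring
      have B2 : ((m : ℝ) - 1) * θ = (m : ℝ) * θ - θ := by ring
      rw [B1, B2, Real.sin_add, Real.sin_sub]; ring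
    have D : ((m + 2 : ℕ) : ℝ) = (m : ℝ) + 2 := by push_cast; ring
    have D1 : ((m + 1 : ℕ) : ℝ) = (m : ℝ) + 1 := by push_cast; ring
    rw [hrec, D]
    rw [D1] at ih2
    rw [C1] at ih2
    have E : ((m : ℝ) + 2 - 1) * θ = ((m : ℝ) + 1) * θ := by ring
    rw [E]
    simp only [Polynomial.eval_sub, Polynomial.eval_mul, Polynomial.eval_X]
    linear_combination (2 * Real.cos θ) * ih2 - ih1
      - (Rseq l 1).eval (2 * Real.cos θ) * t1 + (Rseq l 0).eval (2 * Real.cos θ) * t2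

lemma Rseq_at_two (l : ℤ) : ∀ m : ℕ,
    (Rseq l m).eval 2 = 2 * ((l : ℝ) + 1) * ((l : ℝ) + 2) := by
  intro m
  induction m using Nat.twoStepInduction with
  | zero => simp [Rseq]; ring
  | one => simp [Rseq]; ring
  | more m ih1 ih2 =>
    have hrec : Rseq l (m + 2) = Polynomial.X * Rseq l (m + 1) - Rseq l m := by
      rw [Rseq]
    rw [hrec]
    simp only [Polynomial.eval_sub, Polynomial.eval_mul, Polynomial.eval_X, ih1, ih2]
    ring

lemma Rseq_zero_pos (l : ℤ) (hl : 1 ≤ l) {x : ℝ} (hx : -2 < x) :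
    0 < (Rseq l 0).eval x := by
  have hl' : (1 : ℝ) ≤ (l : ℝ) := by exact_mod_cast hl
  have h0 : Rseq l 0
      = Polynomial.C ((l : ℝ) + 2) * (Polynomial.X + Polynomial.C (2 * (l : ℝ))) := by
    rw [Rseq]
  rw [h0]
  simp only [Polynomial.eval_mul, Polynomial.eval_C, Polynomial.eval_add, Polynomial.eval_X]
  nlinarith

/-- for integers `l ≥ 1` and `k ≥ 0`, for every `r = 0, 1, …, k` the
polynomial `Rseq l (k+2)` has a root in the open interval
`(2 cos ((r+1) π / (k+2)), 2 cos (r π / (k+2)))` (hence at least `k+1` distinct real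
roots). -/
theorem stmt18 (l : ℤ) (hl : 1 ≤ l) (k : ℕ) :
    ∀ r : ℕ, r ≤ k →
      ∃ x : ℝ, 2 * Real.cos ((r + 1) * Real.pi / (k + 2)) < x ∧
        x < 2 * Real.cos (r * Real.pi / (k + 2)) ∧
        (Rseq l (k + 2)).eval x = 0 := by
  have hpi := Real.pi_pos
  have hc : (0 : ℝ) < (k : ℝ) + 2 := by positivity
  set c : ℝ := (k : ℝ) + 2 with hcdef
  have hθlt : ∀ j : ℕ, j ≤ k + 1 → (j : ℝ) * Real.pi / c < Real.pi := by
    intro j hj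
    rw [div_lt_iff₀ hc]
    have hjr : (j : ℝ) ≤ (k : ℝ) + 1 := by exact_mod_cast hj
    have : (j : ℝ) < c := by rw [hcdef]; linarith
    nlinarith
  have hθnonneg : ∀ j : ℕ, 0 ≤ (j : ℝ) * Real.pi / c := by
    intro j; positivity
  have hgt : ∀ j : ℕ, j ≤ k + 1 → -2 < 2 * Real.cos ((j : ℝ) * Real.pi / c) := by
    intro j hj
    have := Real.cos_lt_cos_of_nonneg_of_le_pi (hθnonneg j) le_rfl (hθlt j hj)
    rw [Real.cos_pi] at this
    linarith
  have hsign : ∀ j : ℕ, 1 ≤ j → j ≤ k + 1 →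
      (Rseq l (k + 2)).eval (2 * Real.cos ((j : ℝ) * Real.pi / c))
        = (-1 : ℝ) ^ j * (Rseq l 0).eval (2 * Real.cos ((j : ℝ) * Real.pi / c)) := by
    intro j hj1 hj2
    set θ := (j : ℝ) * Real.pi / c with hθ
    have hθpos : 0 < θ := by
      rw [hθ]
      have : (0 : ℝ) < (j : ℝ) := by exact_mod_cast hj1
      positivity
    have hsθ : 0 < Real.sin θ := Real.sin_pos_of_pos_of_lt_pi hθpos (hθlt j hj2)
    have hfull : ((k + 2 : ℕ) : ℝ) * θ = (j : ℝ) * Real.pi := by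
      rw [hθ, hcdef]
      push_cast
      field_simp
    have hkey := Rseq_key l θ (k + 2)
    have hprev : (((k + 2 : ℕ) : ℝ) - 1) * θ = (j : ℝ) * Real.pi - θ := by
      push_cast at hfull ⊢
      linear_combination hfull
    rw [hfull, hprev] at hkey
    have hsin0 : Real.sin ((j : ℝ) * Real.pi) = 0 := Real.sin_nat_mul_pi j
    have hcosj : Real.cos ((j : ℝ) * Real.pi) = (-1 : ℝ) ^ j := by
      have := Real.cos_nat_mul_pi_sub 0 j
      simpa using this
    have hsinprev : Real.sin ((j : ℝ) * Real.pi - θ) = -((-1 : ℝ) ^ j) * Real.sin θ := by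
      rw [Real.sin_sub, hsin0, hcosj]; ring
    rw [hsin0, hsinprev] at hkey
    have hcancel : (Rseq l (k + 2)).eval (2 * Real.cos θ) * Real.sin θ
        = ((-1 : ℝ) ^ j * (Rseq l 0).eval (2 * Real.cos θ)) * Real.sin θ := by
      linear_combination hkey
    exact mul_right_cancel₀ hsθ.ne' hcancel
  intro r hr
  set θr : ℝ := (r : ℝ) * Real.pi / c with hθr
  set θr1 : ℝ := ((r : ℝ) + 1) * Real.pi / c with hθr1
  have hcast1 : ((r + 1 : ℕ) : ℝ) * Real.pi / c = θr1 := by rw [hθr1]; push_cast; ring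
  have hθr1le : θr1 ≤ Real.pi := by
    rw [← hcast1]; exact (hθlt (r + 1) (by omega)).le
  have hθrlt : θr < θr1 := by
    rw [hθr, hθr1]
    apply div_lt_div_of_pos_right _ hc
    nlinarith
  have hab : 2 * Real.cos θr1 < 2 * Real.cos θr := by
    have := Real.cos_lt_cos_of_nonneg_of_le_pi (hθnonneg r) hθr1le hθrlt
    linarith
  set a : ℝ := 2 * Real.cos θr1 with hadef
  set b : ℝ := 2 * Real.cos θr with hbdef
  have hfa : 0 < (-1 : ℝ) ^ (r + 1) * (Rseq l (k + 2)).eval a := by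
    have hs := hsign (r + 1) (by omega) (by omega)
    rw [hcast1] at hs
    have hgt' : -2 < a := by
      have := hgt (r + 1) (by omega)
      rw [hcast1] at this
      exact this
    have hp := Rseq_zero_pos l hl hgt'
    rw [← hadef] at hs
    rw [hs]
    have h2 : ((-1 : ℝ) ^ (r + 1)) * ((-1 : ℝ) ^ (r + 1)) = 1 := by
      rw [← pow_add]
      exact (Even.add_self (r + 1)).neg_one_pow
    nlinarith [hp, h2]
  have hfb : 0 < (-1 : ℝ) ^ r * (Rseq l (k + 2)).eval b := by
    rcases Nat.eq_zero_or_pos r with hr0 | hrpos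
    · subst hr0
      have hθ0 : θr = 0 := by rw [hθr]; simp
      have hb2 : b = 2 := by rw [hbdef, hθ0, Real.cos_zero]; ring
      rw [hb2, pow_zero, one_mul, Rseq_at_two l (k + 2)]
      have hl' : (1 : ℝ) ≤ (l : ℝ) := by exact_mod_cast hl
      nlinarith
    · have hs := hsign r hrpos (by omega)
      have hp := Rseq_zero_pos l hl (by rw [hbdef]; exact hgt r (by omega) : -2 < b)
      rw [← hbdef] at hs
      rw [hs]
      have h2 : ((-1 : ℝ) ^ r) * ((-1 : ℝ) ^ r) = 1 := by
        rw [← pow_add]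
        exact (Even.add_self r).neg_one_pow
      nlinarith [hp, h2]
  have hcont : ContinuousOn (fun x => (Rseq l (k + 2)).eval x) (Set.Icc a b) :=
    (Rseq l (k + 2)).continuousOn
  rcases Nat.even_or_odd r with he | ho
  · have h1 : ((-1 : ℝ) ^ r) = 1 := Even.neg_one_pow he
    have h2 : ((-1 : ℝ) ^ (r + 1)) = -1 := Odd.neg_one_pow (Even.add_one he)
    rw [h1] at hfb; rw [h2] at hfa
    have hmem : (0 : ℝ) ∈ Set.Ioo ((Rseq l (k + 2)).eval a) ((Rseq l (k + 2)).eval b) :=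
      ⟨by linarith, by linarith⟩
    obtain ⟨x, hx, hfx⟩ := intermediate_value_Ioo hab.le hcont hmem
    exact ⟨x, hx.1, hx.2, hfx⟩
  · have h1 : ((-1 : ℝ) ^ r) = -1 := Odd.neg_one_pow ho
    have h2 : ((-1 : ℝ) ^ (r + 1)) = 1 := Even.neg_one_pow (Odd.add_one ho)
    rw [h1] at hfb; rw [h2] at hfa
    have hmem : (0 : ℝ) ∈ Set.Ioo ((Rseq l (k + 2)).eval b) ((Rseq l (k + 2)).eval a) :=
      ⟨by linarith, by linarith⟩
    obtain ⟨x, hx, hfx⟩ := intermediate_value_Ioo' hab.le hcont hmem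
    exact ⟨x, hx.1, hx.2, hfx⟩
end
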